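/- With notation as above, the convolution tensor {}_h g_1 *_f g_2 = h² g_1 + f² g_2 + 2fh df ⊙ dh is degenerate at every point (i.e., has nontrivial kernel everywhere) if and only if |grad f|_1 is a nonzero constant c on N_1 and |grad h|_2 is the constant 1/c on N_2. -/

import Mathlib

/-!
By the Riesz representation write `df = ⟪u, ·⟫` and `dh = ⟪v, ·⟫`. A vector `X = (X₁, X₂)` lies
in the kernel of `H² g₁ + F² g₂ + FH (df ⊗ dh + dh ⊗ df)` exactly when
`H² X₁ + FH dh(X₂) u = 0` and `F² X₂ + FH df(X₁) v = 0`. Applying `df` and `dh` to these gives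
`F H² df(X₁) (1 - ‖u‖² ‖v‖²) = 0`, while `df(X₁) = 0` would force `X = 0`; conversely
`(F u, -H ‖u‖² v)` is a null vector once `‖u‖ ‖v‖ = 1`. So the tensor is degenerate at `(p, q)`
iff `|grad f|(p) |grad h|(q) = 1`, and a product `a(p) b(q)` is identically `1` iff `a ≡ c ≠ 0`
and `b ≡ 1/c`.
-/

open RealInnerProductSpace

theorem forall_mul_eq_one_iff {α β K : Type*} [Nonempty α] [Nonempty β] [GroupWithZero K]
    (a : α → K) (b : β → K) :
    (∀ p q, a p * b q = 1) ↔ ∃ c ≠ 0, (∀ p, a p = c) ∧ ∀ q, b q = 1 / c := by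
  constructor
  · intro h
    obtain ⟨p₀⟩ := ‹Nonempty α›
    obtain ⟨q₀⟩ := ‹Nonempty β›
    refine ⟨a p₀, left_ne_zero_of_mul_eq_one (h p₀ q₀), fun p => ?_, fun q => ?_⟩
    · rw [eq_inv_of_mul_eq_one_left (h p q₀), eq_inv_of_mul_eq_one_left (h p₀ q₀)]
    · rw [one_div, eq_inv_of_mul_eq_one_right (h p₀ q)]
  · rintro ⟨c, hc, ha, hb⟩ p q
    rw [ha, hb, mul_one_div_cancel hc]

section ConvolutionForm

variable {E₁ E₂ : Type*} [NormedAddCommGroup E₁] [InnerProductSpace ℝ E₁]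
  [NormedAddCommGroup E₂] [InnerProductSpace ℝ E₂]

/-- The tensor `H² g₁ + F² g₂ + 2FH df ⊙ dh` at one point, with `df = ⟪u, ·⟫` and `dh = ⟪v, ·⟫`. -/
def convolutionForm (F H : ℝ) (u : E₁) (v : E₂) (X Y : E₁ × E₂) : ℝ :=
  H ^ 2 * ⟪X.1, Y.1⟫ + F ^ 2 * ⟪X.2, Y.2⟫ + F * H * (⟪u, X.1⟫ * ⟪v, Y.2⟫ + ⟪u, Y.1⟫ * ⟪v, X.2⟫)

theorem convolutionForm_eq_inner (F H : ℝ) (u : E₁) (v : E₂) (X Y : E₁ × E₂) :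
    convolutionForm F H u v X Y =
      ⟪H ^ 2 • X.1 + (F * H * ⟪v, X.2⟫) • u, Y.1⟫ + ⟪F ^ 2 • X.2 + (F * H * ⟪u, X.1⟫) • v, Y.2⟫ := by
  simp only [convolutionForm, inner_add_left, real_inner_smul_left]
  ring

theorem forall_convolutionForm_eq_zero_iff (F H : ℝ) (u : E₁) (v : E₂) (X : E₁ × E₂) :
    (∀ Y, convolutionForm F H u v X Y = 0) ↔
      H ^ 2 • X.1 + (F * H * ⟪v, X.2⟫) • u = 0 ∧ F ^ 2 • X.2 + (F * H * ⟪u, X.1⟫) • v = 0 := by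
  simp only [convolutionForm_eq_inner]
  constructor
  · intro h
    exact ⟨ext_inner_right ℝ fun y => by simpa using h (y, 0),
      ext_inner_right ℝ fun y => by simpa using h (0, y)⟩
  · rintro ⟨h₁, h₂⟩ Y
    simp [h₁, h₂]

theorem exists_ne_zero_convolutionForm_eq_zero_iff {F H : ℝ} (hF : F ≠ 0) (hH : H ≠ 0)
    (u : E₁) (v : E₂) :
    (∃ X ≠ 0, ∀ Y, convolutionForm F H u v X Y = 0) ↔ ‖u‖ * ‖v‖ = 1 := by
  simp only [forall_convolutionForm_eq_zero_iff]
  constructor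
  · rintro ⟨X, hX, h₁, h₂⟩
    have e₁ : H ^ 2 * ⟪u, X.1⟫ + F * H * ⟪v, X.2⟫ * ‖u‖ ^ 2 = 0 := by
      simpa [inner_add_right, real_inner_smul_right, real_inner_self_eq_norm_sq]
        using congrArg (⟪u, ·⟫) h₁
    have e₂ : F ^ 2 * ⟪v, X.2⟫ + F * H * ⟪u, X.1⟫ * ‖v‖ ^ 2 = 0 := by
      simpa [inner_add_right, real_inner_smul_right, real_inner_self_eq_norm_sq]
        using congrArg (⟪v, ·⟫) h₂
    have ha : ⟪u, X.1⟫ ≠ 0 := by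
      intro ha
      have hb : ⟪v, X.2⟫ = 0 := by simpa [ha, hF] using e₂
      exact hX (Prod.ext (by simpa [hb, hH] using h₁) (by simpa [ha, hF] using h₂))
    have hsq : F * H ^ 2 * ⟪u, X.1⟫ * (1 - (‖u‖ * ‖v‖) ^ 2) = 0 := by
      linear_combination F * e₁ - H * ‖u‖ ^ 2 * e₂
    have hsq' : (‖u‖ * ‖v‖) ^ 2 = 1 := by
      have := (mul_eq_zero.mp hsq).resolve_left (by simp [hF, hH, ha])
      linarith
    exact (pow_eq_one_iff_of_nonneg (by positivity) two_ne_zero).mp hsq'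
  · intro huv
    have hu : u ≠ 0 := by
      rintro rfl
      simp at huv
    refine ⟨(F • u, (-(H * ‖u‖ ^ 2)) • v), by simp [hF, hu], ?_, ?_⟩
    · simp only [inner_smul_right, real_inner_self_eq_norm_sq, smul_smul, ← add_smul]
      exact smul_eq_zero_of_left (by linear_combination -(F * H ^ 2) * huv * (‖u‖ * ‖v‖ + 1)) u
    · simp only [inner_smul_right, real_inner_self_eq_norm_sq, smul_smul, ← add_smul]
      exact smul_eq_zero_of_left (by ring) v

theorem exists_ne_zero_forall_eq_zero_iff_norm_mul_norm_eq_one [CompleteSpace E₁]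
    [CompleteSpace E₂] {F H : ℝ} (hF : F ≠ 0) (hH : H ≠ 0) (df : E₁ →L[ℝ] ℝ) (dh : E₂ →L[ℝ] ℝ) :
    (∃ X : E₁ × E₂, X ≠ 0 ∧ ∀ Y : E₁ × E₂,
        H ^ 2 * ⟪X.1, Y.1⟫ + F ^ 2 * ⟪X.2, Y.2⟫ + F * H * (df X.1 * dh Y.2 + df Y.1 * dh X.2) = 0) ↔
      ‖df‖ * ‖dh‖ = 1 := by
  obtain ⟨u, rfl⟩ := (InnerProductSpace.toDual ℝ E₁).surjective df
  obtain ⟨v, rfl⟩ := (InnerProductSpace.toDual ℝ E₂).surjective dh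
  simp only [InnerProductSpace.toDual_apply_apply, LinearIsometryEquiv.norm_map]
  exact exists_ne_zero_convolutionForm_eq_zero_iff hF hH u v

end ConvolutionForm

/-- (Pointwise-family form.) The convolution tensor `h² g₁ + f² g₂ + 2fh df ⊙ dh` on
`N₁ × N₂` is degenerate at every point (has a nontrivial null vector everywhere) if and
only if `|grad f|₁` is a nonzero constant `c` on `N₁` and `|grad h|₂` is the constant
`1/c` on `N₂`.  Points of `N₁, N₂` are indexed by `P1, P2`, tangent spaces by `T1, T2`,
the function values by `F, H` and the differentials by `df, dh`; gradient lengths are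
operator norms. -/
theorem convolution_metric_degenerate_iff
    {P1 P2 : Type*} [Nonempty P1] [Nonempty P2]
    {T1 T2 : Type*} [NormedAddCommGroup T1] [InnerProductSpace ℝ T1] [FiniteDimensional ℝ T1]
    [NormedAddCommGroup T2] [InnerProductSpace ℝ T2] [FiniteDimensional ℝ T2]
    (F : P1 → ℝ) (H : P2 → ℝ) (hF : ∀ p, 0 < F p) (hH : ∀ q, 0 < H q)
    (df : P1 → T1 →L[ℝ] ℝ) (dh : P2 → T2 →L[ℝ] ℝ) :
    (∀ (p : P1) (q : P2), ∃ X : T1 × T2, X ≠ 0 ∧ ∀ Y : T1 × T2,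
        (H q) ^ 2 * (inner ℝ X.1 Y.1 : ℝ) + (F p) ^ 2 * (inner ℝ X.2 Y.2 : ℝ)
          + (F p) * (H q) * (df p X.1 * dh q Y.2 + df p Y.1 * dh q X.2) = 0) ↔
      ∃ c : ℝ, c ≠ 0 ∧ (∀ p, ‖df p‖ = c) ∧ (∀ q, ‖dh q‖ = 1 / c) := by
  have degenerate_at_iff (p : P1) (q : P2) :=
    exists_ne_zero_forall_eq_zero_iff_norm_mul_norm_eq_one (hF p).ne' (hH q).ne' (df p) (dh q)
  exact (forall₂_congr degenerate_at_iff).trans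
    (forall_mul_eq_one_iff (fun p => ‖df p‖) fun q => ‖dh q‖)
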